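/- Let ω = (−1+√3 i)/2 and, for λ ∈ ℂ ∖ {0, 1, −ω²}, set N(λ) = 3√3 i · λ(1−λ)/(λ+ω²)³. Then for every λ ∈ ℂ ∖ {0, 1, −ω, −ω²}: λ/(λ−1) lies in ℂ ∖ {0, 1, −ω²}, N(λ) ≠ 1, and N(λ/(λ−1)) = N(λ)/(N(λ) − 1). -/

import Mathlib

/-!
With `ω² + ω + 1 = 0` and `√3 i = ω - ω²` one has
`(λ + ω²)³ - (λ + ω)³ = 3√3 i λ(1 - λ)`, so `N(λ) = 1 - r(λ)³` with
`r(λ) = (λ + ω)/(λ + ω²)`.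
The substitution `λ ↦ λ/(λ - 1)` sends `r` to `ω / r`, hence `r³` to `1 / r³`,
and `1 - 1/r³ = N/(N - 1)`.
-/

open Complex

/-- `ω = (−1 + √3 i)/2`, the primitive cube root of unity in the upper half-plane. -/
noncomputable def omegaC : ℂ := (-1 + Real.sqrt 3 * Complex.I) / 2

/-- The rational function `N(λ) = 3√3 i λ(1−λ)/(λ+ω²)³`. -/
noncomputable def Nfn (l : ℂ) : ℂ :=
  3 * Real.sqrt 3 * Complex.I * (l * (1 - l)) / (l + omegaC ^ 2) ^ 3

theorem div_sub_one_ne_one {K : Type*} [Field K] (x : K) : x / (x - 1) ≠ 1 := by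
  by_cases hx : x = 1
  · simp [hx]
  · rw [Ne, div_eq_one_iff_eq (sub_ne_zero.2 hx)]
    intro h
    simpa using h.symm

section CubeRootOfUnity

variable {R : Type*} [CommRing R] {w : R}

theorem ne_zero_of_sq_add_self_add_one [Nontrivial R] (hw : w ^ 2 + w + 1 = 0) : w ≠ 0 := by
  rintro rfl
  simp at hw

theorem cube_eq_one_of_sq_add_self_add_one (hw : w ^ 2 + w + 1 = 0) : w ^ 3 = 1 := by
  linear_combination (w - 1) * hw

theorem add_sq_pow_three_sub_add_pow_three (hw : w ^ 2 + w + 1 = 0) (x : R) :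
    (x + w ^ 2) ^ 3 - (x + w) ^ 3 = 3 * (w - w ^ 2) * (x * (1 - x)) := by
  linear_combination (w - 1) * (3 * x * w + w ^ 3) * hw

end CubeRootOfUnity

section MoebiusAction

variable {K : Type*} [Field K] {w x : K}

theorem div_sub_one_add_of_sq_add_self_add_one (hw : w ^ 2 + w + 1 = 0) (hx : x ≠ 1) :
    x / (x - 1) + w = -w ^ 2 * (x + w ^ 2) / (x - 1) := by
  rw [eq_div_iff (sub_ne_zero.2 hx), add_mul, div_mul_cancel₀ _ (sub_ne_zero.2 hx)]
  linear_combination (x + w ^ 2 - w) * hw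

theorem div_sub_one_add_sq_of_sq_add_self_add_one (hw : w ^ 2 + w + 1 = 0) (hx : x ≠ 1) :
    x / (x - 1) + w ^ 2 = -w * (x + w) / (x - 1) := by
  rw [eq_div_iff (sub_ne_zero.2 hx), add_mul, div_mul_cancel₀ _ (sub_ne_zero.2 hx)]
  linear_combination x * hw

theorem add_div_add_sq_div_sub_one (hw : w ^ 2 + w + 1 = 0) (hx : x ≠ 1) (hxw : x + w ≠ 0) :
    (x / (x - 1) + w) / (x / (x - 1) + w ^ 2) = w / ((x + w) / (x + w ^ 2)) := by
  rw [div_sub_one_add_of_sq_add_self_add_one hw hx, div_sub_one_add_sq_of_sq_add_self_add_one hw hx]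
  field_simp [sub_ne_zero.2 hx, ne_zero_of_sq_add_self_add_one hw]

end MoebiusAction

theorem omegaC_sq_add_omegaC_add_one : omegaC ^ 2 + omegaC + 1 = 0 := by
  have hs : (Real.sqrt 3 : ℂ) ^ 2 = 3 := by
    rw [← ofReal_pow, Real.sq_sqrt (by norm_num : (0 : ℝ) ≤ 3)]
    norm_num
  unfold omegaC
  linear_combination (-1 / 4 : ℂ) * hs + ((Real.sqrt 3 : ℂ) ^ 2 / 4) * I_sq

theorem sqrt_three_mul_I : (Real.sqrt 3 : ℂ) * I = omegaC - omegaC ^ 2 := by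
  linear_combination omegaC_sq_add_omegaC_add_one + (by unfold omegaC; ring :
    (Real.sqrt 3 : ℂ) * I = 2 * omegaC + 1)

theorem Nfn_eq_one_sub {l : ℂ} (hl : l + omegaC ^ 2 ≠ 0) :
    Nfn l = 1 - ((l + omegaC) / (l + omegaC ^ 2)) ^ 3 := by
  have hnum : 3 * Real.sqrt 3 * I * (l * (1 - l)) = (l + omegaC ^ 2) ^ 3 - (l + omegaC) ^ 3 := by
    rw [add_sq_pow_three_sub_add_pow_three omegaC_sq_add_omegaC_add_one]
    linear_combination 3 * (l * (1 - l)) * sqrt_three_mul_I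
  rw [Nfn, hnum, div_pow, sub_div, div_self (pow_ne_zero 3 hl)]

/-- Transformation of `N` under `λ ↦ λ/(λ−1)`. -/
theorem N_T_action (l : ℂ) (h0 : l ≠ 0) (h1 : l ≠ 1)
    (h2 : l ≠ -omegaC) (h3 : l ≠ -omegaC ^ 2) :
    (l/(l - 1) ≠ 0 ∧ l/(l - 1) ≠ 1 ∧ l/(l - 1) ≠ -omegaC ^ 2) ∧
    Nfn l ≠ 1 ∧
    Nfn (l/(l - 1)) = Nfn l / (Nfn l - 1) := by
  have hw := omegaC_sq_add_omegaC_add_one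
  have hω : l + omegaC ≠ 0 := fun h => h2 (eq_neg_of_add_eq_zero_left h)
  have hω2 : l + omegaC ^ 2 ≠ 0 := fun h => h3 (eq_neg_of_add_eq_zero_left h)
  have hTω2 : l / (l - 1) + omegaC ^ 2 ≠ 0 := by
    rw [div_sub_one_add_sq_of_sq_add_self_add_one hw h1]
    exact div_ne_zero (mul_ne_zero (neg_ne_zero.2 (ne_zero_of_sq_add_self_add_one hw)) hω)
      (sub_ne_zero.2 h1)
  set r := (l + omegaC) / (l + omegaC ^ 2) with hr
  have hr0 : r ^ 3 ≠ 0 := pow_ne_zero 3 (div_ne_zero hω hω2)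
  refine ⟨⟨div_ne_zero h0 (sub_ne_zero.2 h1), div_sub_one_ne_one l,
    fun h => hTω2 (by rw [h]; ring)⟩, ?_, ?_⟩
  · rw [Nfn_eq_one_sub hω2, Ne, sub_eq_self]
    exact hr0
  · rw [Nfn_eq_one_sub hTω2, Nfn_eq_one_sub hω2, add_div_add_sq_div_sub_one hw h1 hω, ← hr,
      div_pow, cube_eq_one_of_sq_add_self_add_one hw, sub_sub_cancel_left, div_neg, sub_div,
      div_self hr0]
    ring
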